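/- arXiv:1105.4812 — 3 statements merged into one kernel-verified Lean document; each statement's English description precedes it below -/
import Mathlib

section
/- Let A and B be n×n matrices with natural number entries such that every row of A sums to r₁ and every row of B sums to r₂, with at least one zero diagonal entry in A and in B, such that the greatest common divisor of the entries of A is 1 and the greatest common divisor of the entries of B is 1. Suppose that for every pair of reals (a₁, b₁) there exist reals (a₂, b₂) with a₁·Id + b₁·A = a₂·Id + b₂·B, and conversely for every (a₂, b₂) there exist (a₁, b₁) with the same identity. Then A = B. -/
/-!
Taking `(a₁, b₁) = (0, 1)` gives `A = α I + β B`. A zero diagonal entry together with constant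
row sums and `A ≠ 0` forces a nonzero off-diagonal entry of `A`, which makes `β > 0`. Reading
the relation at a zero diagonal entry of `B` gives `α ≥ 0`, and at one of `A` gives `α ≤ 0`,
so `A = β B`. Since both matrices have entries of gcd `1`, the scalar `β` is `1`.
-/

open Finset

lemma Matrix.exists_offDiag_ne_zero_of_rowSum_eq {ι M : Type*} [Fintype ι] [DecidableEq ι]
    [AddCommMonoid M] [PartialOrder M] [CanonicallyOrderedAdd M]
    {A : Matrix ι ι M} {r : M} (hrow : ∀ i, ∑ j, A i j = r) {i₀ : ι} (hdiag : A i₀ i₀ = 0)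
    (hA : A ≠ 0) : ∃ i j, i ≠ j ∧ A i j ≠ 0 := by
  by_contra! hoff
  -- row `i₀` vanishes, so every row sum is zero, and hence so is every entry
  have hr : r = 0 := by
    rw [← hrow i₀, sum_eq_single i₀ (fun j _ hj => hoff i₀ j hj.symm) (by simp), hdiag]
  exact hA <| Matrix.ext fun i j => sum_eq_zero_iff.mp ((hrow i).trans hr) j (mem_univ j)

lemma Matrix.eq_smul_of_eq_smul_one_add_smul {ι K : Type*} [Fintype ι] [DecidableEq ι]
    [Field K] [LinearOrder K] [IsStrictOrderedRing K] {A B : Matrix ι ι K} {α β : K}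
    (hAB : A = α • 1 + β • B) (hA : ∀ i j, 0 ≤ A i j) (hB : ∀ i j, 0 ≤ B i j)
    (hAdiag : ∃ i, A i i = 0) (hBdiag : ∃ i, B i i = 0) (hoff : ∃ i j, i ≠ j ∧ A i j ≠ 0) :
    A = β • B := by
  have entry : ∀ i j, A i j = α * (1 : Matrix ι ι K) i j + β * B i j := fun i j => by
    simpa using congrFun (congrFun hAB i) j
  obtain ⟨iA, hiA⟩ := hAdiag
  obtain ⟨iB, hiB⟩ := hBdiag
  obtain ⟨i₀, j₀, hij, hA₀⟩ := hoff
  have hβ : 0 < β := by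
    have h := entry i₀ j₀
    rw [Matrix.one_apply_ne hij, mul_zero, zero_add] at h
    exact pos_of_mul_pos_left (h ▸ lt_of_le_of_ne (hA i₀ j₀) (Ne.symm hA₀)) (hB i₀ j₀)
  have hα_nonneg : 0 ≤ α := by
    simpa [hiB] using (entry iB iB).symm.trans_ge (hA iB iB)
  have hα_nonpos : α ≤ 0 := by
    have h := entry iA iA
    rw [hiA, Matrix.one_apply_eq] at h
    nlinarith [hB iA iA]
  rw [hAB, le_antisymm hα_nonpos hα_nonneg, zero_smul, zero_add]

lemma eq_of_cast_eq_mul_of_gcd_eq_one {ι K : Type*} [Fintype ι] [Field K] [CharZero K]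
    {f g : ι → ℕ} (hf : univ.gcd f = 1) (hg : univ.gcd g = 1) {c : K}
    (h : ∀ i, (f i : K) = c * g i) : f = g := by
  obtain ⟨i₀, hi₀⟩ : ∃ i, g i ≠ 0 := by
    by_contra! hzero
    simp [gcd_eq_zero_iff.mpr fun i _ => hzero i] at hg
  have hcross : ∀ i, g i₀ * f i = f i₀ * g i := fun i => by
    exact_mod_cast (by rw [h, h]; ring : (g i₀ * f i : K) = f i₀ * g i)
  -- comparing the gcds of both sides of `hcross` gives `g i₀ = f i₀`
  have hi₀_eq : g i₀ = f i₀ := by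
    have := congrArg (univ.gcd ·) (funext hcross)
    simpa [Finset.gcd_mul_left, hf, hg] using this
  funext i
  exact Nat.eq_of_mul_eq_mul_left (Nat.pos_of_ne_zero hi₀) (hi₀_eq ▸ hcross i)

theorem reduced_linear_equiv_eq_general (n r₁ : ℕ)
    (A B : Matrix (Fin n) (Fin n) ℕ)
    (hA : ∀ i, ∑ j, A i j = r₁)
    (hAdiag : ∃ i, A i i = 0) (hBdiag : ∃ i, B i i = 0)
    (hAgcd : (Finset.univ : Finset (Fin n × Fin n)).gcd (fun p => A p.1 p.2) = 1)
    (hBgcd : (Finset.univ : Finset (Fin n × Fin n)).gcd (fun p => B p.1 p.2) = 1)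
    (h₁ : ∀ a₁ b₁ : ℝ, ∃ a₂ b₂ : ℝ,
      a₁ • (1 : Matrix (Fin n) (Fin n) ℝ) + b₁ • A.map (Nat.cast : ℕ → ℝ)
        = a₂ • 1 + b₂ • B.map (Nat.cast : ℕ → ℝ)) :
    A = B := by
  obtain ⟨α, β, hαβ⟩ := h₁ 0 1
  rw [zero_smul, zero_add, one_smul] at hαβ
  have hA_ne : A ≠ 0 := by
    rintro rfl
    exact zero_ne_one ((gcd_eq_zero_iff.mpr fun _ _ => rfl).symm.trans hAgcd)
  obtain ⟨iA, hiA⟩ := hAdiag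
  have hoff := Matrix.exists_offDiag_ne_zero_of_rowSum_eq hA hiA hA_ne
  have hsmul := Matrix.eq_smul_of_eq_smul_one_add_smul hαβ (fun _ _ => Nat.cast_nonneg _)
    (fun _ _ => Nat.cast_nonneg _) ⟨iA, by simp [hiA]⟩
    (hBdiag.imp fun _ h => by simp [h]) (by simpa using hoff)
  have hAB := eq_of_cast_eq_mul_of_gcd_eq_one hAgcd hBgcd
    (fun p => by simpa using congrFun (congrFun hsmul p.1) p.2)
  exact Matrix.ext fun i j => congrFun hAB (i, j)

/-- Two reduced homogeneous networks that are linearly equivalent are equal. -/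
theorem reduced_linear_equiv_eq (n r₁ r₂ : ℕ) (hn : 1 ≤ n)
    (A B : Matrix (Fin n) (Fin n) ℕ)
    (hA : ∀ i, ∑ j, A i j = r₁) (hB : ∀ i, ∑ j, B i j = r₂)
    (hAdiag : ∃ i, A i i = 0) (hBdiag : ∃ i, B i i = 0)
    (hAgcd : (Finset.univ : Finset (Fin n × Fin n)).gcd (fun p => A p.1 p.2) = 1)
    (hBgcd : (Finset.univ : Finset (Fin n × Fin n)).gcd (fun p => B p.1 p.2) = 1)
    (h₁ : ∀ a₁ b₁ : ℝ, ∃ a₂ b₂ : ℝ,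
      a₁ • (1 : Matrix (Fin n) (Fin n) ℝ) + b₁ • A.map (Nat.cast : ℕ → ℝ)
        = a₂ • 1 + b₂ • B.map (Nat.cast : ℕ → ℝ))
    (h₂ : ∀ a₂ b₂ : ℝ, ∃ a₁ b₁ : ℝ,
      a₁ • (1 : Matrix (Fin n) (Fin n) ℝ) + b₁ • A.map (Nat.cast : ℕ → ℝ)
        = a₂ • 1 + b₂ • B.map (Nat.cast : ℕ → ℝ)) :
    A = B :=
  reduced_linear_equiv_eq_general n r₁ A B hA hAdiag hBdiag hAgcd hBgcd h₁
end

section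
/- Minimal connected 2-cell homogeneous networks of degree r ≥ 2 are in bijection with integers k with 1 ≤ k ≤ r and gcd(r,k) = 1: each such network has adjacency matrix with entries E 1 1 = r−k, E 1 2 = k, E 2 1 = r, E 2 2 = 0 (up to swapping vertices). Consequently the number of such networks up to isomorphism is φ(r). -/
/-! With the loop-free vertex normalized to be vertex `1`, the row sums force
`E = ![![r - k, k], ![r, 0]]` with `k = E 0 1`, and the gcd of the four entries is then
`gcd r k`. So minimal connected networks are exactly these matrices with `1 ≤ k ≤ r` and
`gcd r k = 1`, and `k` is read off as the `(0, 1)` entry; counting such `k` gives `φ r`. -/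

def twoCellMatrix (r k : ℕ) : Matrix (Fin 2) (Fin 2) ℕ := ![![r - k, k], ![r, 0]]

theorem twoCellMatrix_injective (r : ℕ) : Function.Injective (twoCellMatrix r) :=
  fun _ _ h => congrFun (congrFun h 0) 1

theorem eq_twoCellMatrix_of_rowSum {r : ℕ} {E : Matrix (Fin 2) (Fin 2) ℕ}
    (hsum : ∀ i, ∑ j, E i j = r) (h11 : E 1 1 = 0) : E = twoCellMatrix r (E 0 1) := by
  have h0 := hsum 0
  have h1 := hsum 1
  simp only [Fin.sum_univ_two] at h0 h1
  ext i j
  fin_cases i <;> fin_cases j <;> simp [twoCellMatrix] <;> omega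

theorem gcd_twoCellMatrix (r k : ℕ) :
    (Finset.univ : Finset (Fin 2 × Fin 2)).gcd (fun p => twoCellMatrix r k p.1 p.2)
      = Nat.gcd r k := by
  refine Nat.dvd_antisymm
    (Nat.dvd_gcd (Finset.gcd_dvd (Finset.mem_univ (1, 0)))
      (Finset.gcd_dvd (Finset.mem_univ (0, 1))))
    (Finset.dvd_gcd fun p _ => ?_)
  fin_cases p
  · exact Nat.dvd_sub (Nat.gcd_dvd_left r k) (Nat.gcd_dvd_right r k)
  · exact Nat.gcd_dvd_right r k
  · exact Nat.gcd_dvd_left r k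
  · exact dvd_zero _

theorem ncard_coprime_Icc (r : ℕ) :
    {k : ℕ | 1 ≤ k ∧ k ≤ r ∧ Nat.gcd r k = 1}.ncard = Nat.totient r := by
  rw [← Nat.filter_coprime_Ico_eq_totient r 1, ← Set.ncard_coe_finset]
  congr 1
  ext k
  simp only [Set.mem_ofPred_eq, Finset.coe_filter, Finset.mem_Ico, Nat.Coprime]
  omega

theorem minimal_twoCell_eq_image (r : ℕ) :
    {E : Matrix (Fin 2) (Fin 2) ℕ |
        (∀ i, ∑ j, E i j = r) ∧ (∃ i, E i i = 0) ∧
        (Finset.univ : Finset (Fin 2 × Fin 2)).gcd (fun p => E p.1 p.2) = 1 ∧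
        0 < E 0 1 ∧ 0 < E 1 0 ∧ E 1 1 = 0}
      = twoCellMatrix r '' {k : ℕ | 1 ≤ k ∧ k ≤ r ∧ Nat.gcd r k = 1} := by
  ext E
  constructor
  · rintro ⟨hsum, -, hgcd, h01, -, h11⟩
    have hE := eq_twoCellMatrix_of_rowSum hsum h11
    have hk : E 0 1 ≤ r :=
      (Finset.single_le_sum (fun _ _ => Nat.zero_le _) (Finset.mem_univ 1)).trans_eq (hsum 0)
    rw [hE, gcd_twoCellMatrix] at hgcd
    exact ⟨E 0 1, ⟨h01, hk, hgcd⟩, hE.symm⟩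
  · rintro ⟨k, ⟨hk1, hkr, hcop⟩, rfl⟩
    refine ⟨fun i => ?_, ⟨1, rfl⟩, (gcd_twoCellMatrix r k).trans hcop, hk1, hk1.trans hkr, rfl⟩
    fin_cases i <;> simp [twoCellMatrix, Fin.sum_univ_two, Nat.sub_add_cancel hkr]

theorem two_cell_minimal_classification_general (r : ℕ) :
    {E : Matrix (Fin 2) (Fin 2) ℕ |
        (∀ i, ∑ j, E i j = r) ∧ (∃ i, E i i = 0) ∧
        (Finset.univ : Finset (Fin 2 × Fin 2)).gcd (fun p => E p.1 p.2) = 1 ∧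
        0 < E 0 1 ∧ 0 < E 1 0 ∧ E 1 1 = 0}
      = (fun k : ℕ => (![![r - k, k], ![r, 0]] : Matrix (Fin 2) (Fin 2) ℕ)) ''
          {k : ℕ | 1 ≤ k ∧ k ≤ r ∧ Nat.gcd r k = 1} ∧
    Set.InjOn (fun k : ℕ => (![![r - k, k], ![r, 0]] : Matrix (Fin 2) (Fin 2) ℕ))
      {k : ℕ | 1 ≤ k ∧ k ≤ r ∧ Nat.gcd r k = 1} ∧
    {E : Matrix (Fin 2) (Fin 2) ℕ |
        (∀ i, ∑ j, E i j = r) ∧ (∃ i, E i i = 0) ∧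
        (Finset.univ : Finset (Fin 2 × Fin 2)).gcd (fun p => E p.1 p.2) = 1 ∧
        0 < E 0 1 ∧ 0 < E 1 0 ∧ E 1 1 = 0}.ncard = Nat.totient r := by
  have hset := minimal_twoCell_eq_image r
  refine ⟨hset, (twoCellMatrix_injective r).injOn, ?_⟩
  rw [hset, Set.ncard_image_of_injective _ (twoCellMatrix_injective r), ncard_coprime_Icc]

/-- Minimal connected 2-cell degree-r networks (normalized so that vertex 2 has no
loops) correspond bijectively to k with 1 ≤ k ≤ r and gcd(r,k) = 1, via
E = ![![r-k, k], ![r, 0]]; hence there are φ(r) of them up to isomorphism. -/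
theorem two_cell_minimal_classification (r : ℕ) (hr : 2 ≤ r) :
    {E : Matrix (Fin 2) (Fin 2) ℕ |
        (∀ i, ∑ j, E i j = r) ∧ (∃ i, E i i = 0) ∧
        (Finset.univ : Finset (Fin 2 × Fin 2)).gcd (fun p => E p.1 p.2) = 1 ∧
        0 < E 0 1 ∧ 0 < E 1 0 ∧ E 1 1 = 0}
      = (fun k : ℕ => (![![r - k, k], ![r, 0]] : Matrix (Fin 2) (Fin 2) ℕ)) ''
          {k : ℕ | 1 ≤ k ∧ k ≤ r ∧ Nat.gcd r k = 1} ∧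
    Set.InjOn (fun k : ℕ => (![![r - k, k], ![r, 0]] : Matrix (Fin 2) (Fin 2) ℕ))
      {k : ℕ | 1 ≤ k ∧ k ≤ r ∧ Nat.gcd r k = 1} ∧
    {E : Matrix (Fin 2) (Fin 2) ℕ |
        (∀ i, ∑ j, E i j = r) ∧ (∃ i, E i i = 0) ∧
        (Finset.univ : Finset (Fin 2 × Fin 2)).gcd (fun p => E p.1 p.2) = 1 ∧
        0 < E 0 1 ∧ 0 < E 1 0 ∧ E 1 1 = 0}.ncard = Nat.totient r :=
  two_cell_minimal_classification_general r
end

section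
/- The size of the conjugacy class in the symmetric group Sₙ corresponding to the cycle type given by a partition with αᵢ parts of size i (so that Σ i·αᵢ = n) is n! / (1^{α₁} · 2^{α₂} · … · n^{αₙ} · α₁! · α₂! · … · αₙ!). -/
/-! By orbit–stabilizer the class has size `n! / |C(σ)|`, and Mathlib's
`Equiv.Perm.card_isConj_eq` already gives the centralizer order as
`(n - Σ cycle lengths)! · ∏ cycle lengths · ∏ᵢ (count i)!`. What remains is to regroup this
as `∏ᵢ i^{αᵢ} αᵢ!`: the fixed points are the parts of size 1, contributing `1^{α₁} α₁!`. -/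

open Finset Nat

theorem Multiset.prod_mul_prod_factorial_count_eq_prod {m : Multiset ℕ} {s : Finset ℕ}
    (hs : m.toFinset ⊆ s) :
    m.prod * ∏ i ∈ m.toFinset, (m.count i)! = ∏ i ∈ s, i ^ m.count i * (m.count i)! := by
  rw [Finset.prod_multiset_count, ← prod_mul_distrib]
  refine prod_subset hs fun i _ hi => ?_
  simp [Multiset.count_eq_zero.2 fun h => hi (Multiset.mem_toFinset.2 h)]

theorem Equiv.Perm.cycleType_toFinset_subset_Icc {β : Type*} [Fintype β] [DecidableEq β]
    (σ : Perm β) : σ.cycleType.toFinset ⊆ Icc 2 (Fintype.card β) := fun i hi => by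
  rw [Multiset.mem_toFinset] at hi
  exact mem_Icc.2 ⟨two_le_of_mem_cycleType hi,
    (le_card_support_of_mem_cycleType hi).trans (card_le_univ _)⟩

theorem conj_class_card_general (n : ℕ) (σ : Equiv.Perm (Fin n)) (α : ℕ → ℕ)
    (hα₁ : α 1 = n - σ.cycleType.sum)
    (hα : ∀ i, 2 ≤ i → α i = σ.cycleType.count i) :
    Nat.card {τ : Equiv.Perm (Fin n) // IsConj σ τ}
      = n.factorial / ∏ i ∈ Finset.Icc 1 n, (i ^ α i * (α i).factorial) := by
  obtain rfl | hn := n.eq_zero_or_pos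
  · simp [Subsingleton.elim σ 1]
  have hIcc : Icc 1 n = insert 1 (Icc 2 n) := by
    ext i
    simp only [mem_Icc, mem_insert]
    omega
  have hcount : ∏ i ∈ Icc 2 n, i ^ α i * (α i)! =
      ∏ i ∈ Icc 2 n, i ^ σ.cycleType.count i * (σ.cycleType.count i)! :=
    prod_congr rfl fun i hi => by rw [hα i (mem_Icc.1 hi).1]
  have hden : ∏ i ∈ Icc 1 n, i ^ α i * (α i)! =
      (n - σ.cycleType.sum)! * σ.cycleType.prod * ∏ i ∈ σ.cycleType.toFinset,
        (σ.cycleType.count i)! := by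
    rw [hIcc, prod_insert (by simp), hcount, one_pow, one_mul, hα₁, mul_assoc,
      Multiset.prod_mul_prod_factorial_count_eq_prod
        (by simpa using σ.cycleType_toFinset_subset_Icc)]
  simpa only [Fintype.card_fin, hden, Set.coe_ofPred] using σ.card_isConj_eq

/-- The size of the conjugacy class of a permutation of cycle type
[1^{α₁} 2^{α₂} ⋯ n^{αₙ}] is n! / (∏ i, i^{αᵢ} · αᵢ!). -/
theorem conj_class_card (n : ℕ) (σ : Equiv.Perm (Fin n)) (α : ℕ → ℕ)
    (hα₁ : α 1 = n - σ.cycleType.sum)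
    (hα : ∀ i, 2 ≤ i → α i = σ.cycleType.count i)
    (hpart : ∑ i ∈ Finset.Icc 1 n, i * α i = n) :
    Nat.card {τ : Equiv.Perm (Fin n) // IsConj σ τ}
      = n.factorial / ∏ i ∈ Finset.Icc 1 n, (i ^ α i * (α i).factorial) :=
  conj_class_card_general n σ α hα₁ hα
end
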